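/- arXiv:math/0508304 — 5 statements merged into one kernel-verified Lean document; each statement's English description precedes it below -/
import Mathlib

section
/- Let A be a commutative Noetherian ring and J ⊆ A a finitely generated ideal such that J/J² is generated by n elements as an A/J-module. Then for any a ∈ A, the ideal J + (a) is generated by n+1 elements. -/
/-!
Lift generators of `J/J²` to `x₁, …, xₙ ∈ J` and put `I = (x₁, …, xₙ)`. Then `J = I + J²`, so
Nakayama's lemma gives `e ∈ J` with `(1 - e) J ⊆ I`. Modulo `I` the element `e` is an idempotent
generating `J`, and `x₁, …, xₙ, e + a (1 - e)` generate `J + (a)`.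
-/

namespace Ideal

variable {A : Type*} [CommRing A]

theorem le_map_subtype_sup_pow_two_of_map_toCotangent_eq_top {J : Ideal A} {M : Submodule A J}
    (hM : M.map J.toCotangent = ⊤) : J ≤ M.map J.subtype ⊔ J ^ 2 := by
  rw [← map_toCotangent_ker, ← Submodule.map_sup, ← Submodule.comap_map_eq, hM,
    Submodule.comap_top, Submodule.map_top, Submodule.range_subtype]

theorem exists_mem_forall_one_sub_mul_mem_of_le_sup_pow_two {I J : Ideal A} (hJ : J.FG)
    (hJI : J ≤ I ⊔ J ^ 2) : ∃ e ∈ J, ∀ y ∈ J, (1 - e) * y ∈ I := by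
  obtain ⟨r, hr, hrJ⟩ := Submodule.exists_sub_one_mem_and_smul_le_of_fg_of_le_sup hJ le_rfl
    (by rwa [smul_eq_mul, ← pow_two])
  refine ⟨1 - r, by simpa using J.neg_mem hr, fun y hy => ?_⟩
  rw [sub_sub_cancel]
  exact hrJ (Submodule.smul_mem_pointwise_smul y r J hy)

theorem sup_span_singleton_eq_of_forall_one_sub_mul_mem {I J : Ideal A} {e : A} (hIJ : I ≤ J) (he : e ∈ J)
    (hI : ∀ y ∈ J, (1 - e) * y ∈ I) (a : A) :
    I ⊔ span {e + a * (1 - e)} = J ⊔ span {a} := by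
  set f := e + a * (1 - e)
  set S := I ⊔ span {f}
  have hfS : f ∈ S := mem_sup_right (mem_span_singleton_self f)
  have hIS : I ≤ S := le_sup_left
  -- `e` is idempotent modulo `I`, which lets `f` recover `e`.
  have heS : e ∈ S := by
    have hee : (1 - e) * e ∈ I := hI e he
    have : e = (1 - e) * e + (e * f - a * ((1 - e) * e)) := by ring
    rw [this]
    exact S.add_mem (hIS hee) (S.sub_mem (S.mul_mem_left e hfS) (hIS (I.mul_mem_left a hee)))
  apply le_antisymm
  · refine sup_le (hIJ.trans le_sup_left) ((span_singleton_le_iff_mem _).mpr ?_)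
    exact add_mem (mem_sup_left he) (mem_sup_right (mul_mem_right _ _ (mem_span_singleton_self a)))
  · refine sup_le (fun y hy => ?_) ((span_singleton_le_iff_mem _).mpr ?_)
    · have : y = (1 - e) * y + e * y := by ring
      rw [this]
      exact S.add_mem (hIS (hI y hy)) (S.mul_mem_right y heS)
    · have : a = f - e + a * e := by ring
      rw [this]
      exact S.add_mem (S.sub_mem hfS heS) (S.mul_mem_left a heS)

end Ideal

theorem mohan_kumar_lemma_general {A : Type*} [CommRing A]
    (J : Ideal A) (hJ : J.FG) (n : ℕ)
    (hgen : ∃ g : Fin n → J.Cotangent, Submodule.span A (Set.range g) = ⊤)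
    (a : A) :
    ∃ h : Fin (n + 1) → A, Ideal.span (Set.range h) = J ⊔ Ideal.span {a} := by
  obtain ⟨g, hg⟩ := hgen
  choose x hx using fun i => J.toCotangent_surjective (g i)
  have hlift : (Submodule.span A (Set.range x)).map J.toCotangent = ⊤ := by
    rw [Submodule.map_span, ← Set.range_comp, show J.toCotangent ∘ x = g from funext hx, hg]
  have hJI := Ideal.le_map_subtype_sup_pow_two_of_map_toCotangent_eq_top hlift
  rw [Submodule.map_span, ← Set.range_comp] at hJI
  have hIJ : Ideal.span (Set.range (J.subtype ∘ x)) ≤ J :=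
    Ideal.span_le.mpr (Set.range_subset_iff.mpr fun i => (x i).2)
  obtain ⟨e, he, hI⟩ := Ideal.exists_mem_forall_one_sub_mul_mem_of_le_sup_pow_two hJ hJI
  refine ⟨Fin.snoc (J.subtype ∘ x) (e + a * (1 - e)), ?_⟩
  rw [Fin.range_snoc, Ideal.span_insert, sup_comm]
  exact Ideal.sup_span_singleton_eq_of_forall_one_sub_mul_mem hIJ he hI a

/-- Mohan Kumar's lemma: if `J/J²` is generated by `n` elements, then for any
`a ∈ A`, the ideal `J + (a)` is generated by `n + 1` elements. -/
theorem mohan_kumar_lemma {A : Type*} [CommRing A] [IsNoetherianRing A]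
    (J : Ideal A) (hJ : J.FG) (n : ℕ)
    (hgen : ∃ g : Fin n → J.Cotangent, Submodule.span A (Set.range g) = ⊤)
    (a : A) :
    ∃ h : Fin (n + 1) → A, Ideal.span (Set.range h) = J ⊔ Ideal.span {a} :=
  mohan_kumar_lemma_general J hJ n hgen a
end

section
/- Let B be a commutative Noetherian ring and I an ideal of B such that I = (f₁,...,fₙ) + I² for elements f₁,...,fₙ ∈ I. Then there exists s ∈ I² such that I = (f₁,...,fₙ,s) and s(1-s) ∈ (f₁,...,fₙ). -/
/-- If `I = (f₁,…,fₙ) + I²`, then there exists `s ∈ I²` with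
`I = (f₁,…,fₙ, s)` and `s(1-s) ∈ (f₁,…,fₙ)`. -/
theorem exists_s_generator {B : Type*} [CommRing B] [IsNoetherianRing B]
    (I : Ideal B) (n : ℕ) (f : Fin n → B) (hf : ∀ i, f i ∈ I)
    (hI : I = Ideal.span (Set.range f) ⊔ I ^ 2) :
    ∃ s ∈ I ^ 2, I = Ideal.span (Set.range f ∪ {s}) ∧
      s * (1 - s) ∈ Ideal.span (Set.range f) := by
  set J : Ideal B := Ideal.span (Set.range f) with hJ
  let q : B →+* B ⧸ J := Ideal.Quotient.mk J
  have hqsurj : Function.Surjective q := Ideal.Quotient.mk_surjective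
  set Ibar : Ideal (B ⧸ J) := I.map q with hIbar
  have hmapJ : J.map q = ⊥ := by
    exact Ideal.map_quotient_self J
  have hsq : Ibar = Ibar ^ 2 := by
    conv_lhs => rw [hIbar, hI]
    rw [Ideal.map_sup, hmapJ, Ideal.map_pow, bot_sup_eq, hIbar]
  have hle : Ibar ≤ Ibar • Ibar := by
    rw [smul_eq_mul, ← pow_two, ← hsq]
  have hfg : Ibar.FG := (isNoetherian_def.mp inferInstance) Ibar
  obtain ⟨r, hr1, hr0⟩ :=
    Submodule.exists_sub_one_mem_and_smul_eq_zero_of_fg_of_le_smul Ibar Ibar hfg hle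
  have hebar : (1 : B ⧸ J) - r ∈ Ibar := by
    have := Ibar.neg_mem hr1; simpa [neg_sub] using this
  obtain ⟨t, htI, hqt⟩ := (Ideal.mem_map_iff_of_surjective q hqsurj).mp hebar
  refine ⟨t * t, by rw [pow_two]; exact Ideal.mul_mem_mul htI htI, ?_, ?_⟩
  · -- I = span (range f ∪ {t*t})
    have hts : t - t * t ∈ J := by
      rw [← Ideal.Quotient.eq_zero_iff_mem]
      have : q (t - t * t) = r • q t := by
        push_cast [map_sub, map_mul, hqt]; ring_nf
      rw [this, hr0 (q t) (hqt ▸ hebar)]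
    apply le_antisymm
    · intro x hx
      have hx0 : q (x - t * x) = 0 := by
        have h1 : r • q x = 0 := hr0 (q x) (Ideal.mem_map_of_mem q hx)
        rw [smul_eq_mul] at h1
        rw [map_sub, map_mul, hqt]
        linear_combination h1
      have hxJ : x - t * x ∈ J := Ideal.Quotient.eq_zero_iff_mem.mp hx0
      have hJle : J ≤ Ideal.span (Set.range f ∪ {t * t}) :=
        Ideal.span_mono Set.subset_union_left
      have hsx : (t * t) * x ∈ Ideal.span (Set.range f ∪ {t * t}) := by
        exact Ideal.mul_mem_right x _
          (Ideal.subset_span (Set.mem_union_right _ rfl))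
      have : x = (x - t * x) + (t - t * t) * x + (t * t) * x := by ring
      rw [this]
      exact add_mem (add_mem (hJle hxJ) (hJle (J.mul_mem_right x hts))) hsx
    · rw [Ideal.span_le]
      rintro y (⟨i, rfl⟩ | rfl)
      · exact hf i
      · exact I.mul_mem_left t htI
  · -- (t*t)(1 - t*t) ∈ J
    rw [← Ideal.Quotient.eq_zero_iff_mem]
    have he : q t * q t = q t := by
      have : q (t - t * t) = r • q t := by
        push_cast [map_sub, map_mul, hqt]
        rw [smul_eq_mul]; ring
      have h0 : q (t - t * t) = 0 := by rw [this, hr0 (q t) (hqt ▸ hebar)]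
      have := sub_eq_zero.mp (by simpa [map_sub, map_mul] using h0)
      linear_combination -this
    calc q (t * t * (1 - t * t)) = q t * q t * (1 - q t * q t) := by
          push_cast [map_mul, map_sub, map_one]; ring
      _ = q t * (1 - q t) := by rw [he]
      _ = r • q t := by rw [smul_eq_mul]; linear_combination (q t) * hqt.symm
      _ = 0 := hr0 (q t) (hqt ▸ hebar)
end

section
/- Let A be a commutative Noetherian ring, I an ideal, and f₁,...,fₙ ∈ I a regular sequence with I = (f₁,...,fₙ) + I². Suppose r is a positive integer and set J = I^r + (f₁,...,f_{n-1}). Then J = (f₁,...,f_{n-1}, fₙ^r) + J². -/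
open RingTheory.Sequence

private lemma aux_sup_pow_le {A : Type*} [CommRing A] (P Q : Ideal A) :
    ∀ m, (P ⊔ Q) ^ m ≤ P ^ m ⊔ Q := by
  intro m
  induction m with
  | zero => simp
  | succ m ih =>
    rw [pow_succ]
    calc (P ⊔ Q) ^ m * (P ⊔ Q) ≤ (P ^ m ⊔ Q) * (P ⊔ Q) := Ideal.mul_mono_left ih
    _ = P ^ m * P ⊔ P ^ m * Q ⊔ (Q * P ⊔ Q * Q) := by
        rw [Ideal.sup_mul, Ideal.mul_sup, Ideal.mul_sup]
    _ ≤ P ^ (m + 1) ⊔ Q := by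
        rw [← pow_succ]
        exact sup_le (sup_le le_sup_left (le_sup_of_le_right Ideal.mul_le_right))
          (sup_le (le_sup_of_le_right Ideal.mul_le_left)
            (le_sup_of_le_right Ideal.mul_le_right))

private lemma aux_pow_succ_le {A : Type*} [CommRing A] (P Q : Ideal A) :
    ∀ m, (P ⊔ Q) ^ (m + 1) ≤ P ^ (m + 1) ⊔ Q * (P ⊔ Q) ^ m := by
  intro m
  induction m with
  | zero => simp
  | succ m ih =>
    rw [pow_succ]
    calc (P ⊔ Q) ^ (m + 1) * (P ⊔ Q)
        ≤ (P ^ (m + 1) ⊔ Q * (P ⊔ Q) ^ m) * (P ⊔ Q) := Ideal.mul_mono_left ih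
    _ = (P ^ (m + 1) * P ⊔ P ^ (m + 1) * Q) ⊔ Q * (P ⊔ Q) ^ m * (P ⊔ Q) := by
        rw [Ideal.sup_mul, Ideal.mul_sup]
    _ ≤ P ^ (m + 2) ⊔ Q * (P ⊔ Q) ^ (m + 1) := by
        rw [← pow_succ, mul_assoc, ← pow_succ]
        refine sup_le (sup_le le_sup_left (le_sup_of_le_right ?_)) le_sup_right
        rw [mul_comm]
        exact Ideal.mul_mono_right (Ideal.pow_right_mono le_sup_left _)

/-- Boratynski's key computation: if `f₁,…,fₙ` is a regular sequence in `I` with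
`I = (f₁,…,fₙ) + I²` and `J = Iʳ + (f₁,…,f_{n-1})`, then
`J = (f₁,…,f_{n-1}, fₙʳ) + J²`. -/
theorem boratynski_computation {A : Type*} [CommRing A] [IsNoetherianRing A]
    (I : Ideal A) (n : ℕ) (f : Fin (n + 1) → A)
    (hreg : IsWeaklyRegular A (List.ofFn f))
    (hf : ∀ i, f i ∈ I)
    (hI : I = Ideal.span (Set.range f) ⊔ I ^ 2)
    (r : ℕ) (hr : 1 ≤ r)
    (J : Ideal A) (hJ : J = I ^ r ⊔ Ideal.span (Set.range (Fin.init f))) :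
    J = Ideal.span (Set.range (Fin.init f) ∪ {f (Fin.last n) ^ r}) ⊔ J ^ 2 := by
  set K := Ideal.span (Set.range (Fin.init f)) with hK
  set g := f (Fin.last n) with hg
  have hKI : K ≤ I := by
    rw [hK, Ideal.span_le]
    rintro x ⟨i, rfl⟩
    exact hf _
  have hgI : g ∈ I := hf _
  set M := Ideal.span {g} ⊔ K with hM
  have hMI : M ≤ I := sup_le ((Ideal.span_singleton_le_iff_mem I).2 hgI) hKI
  have hS : Ideal.span (Set.range f) ≤ M := by
    rw [Ideal.span_le]
    rintro x ⟨i, rfl⟩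
    induction i using Fin.lastCases with
    | last => exact Ideal.mem_sup_left (Ideal.mem_span_singleton_self g)
    | cast j =>
      exact Ideal.mem_sup_right (Ideal.subset_span ⟨j, rfl⟩)
  -- I ≤ M ⊔ I^(t+1) for all t
  have h1 : ∀ t, I ≤ M ⊔ I ^ (t + 1) := by
    intro t
    induction t with
    | zero => simpa using le_sup_right
    | succ t ih =>
      conv_lhs => rw [hI]
      refine sup_le (le_sup_of_le_left hS) ?_
      calc I ^ 2 = I * I := sq I
      _ ≤ (M ⊔ I ^ (t + 1)) * I := Ideal.mul_mono_left ih
      _ = M * I ⊔ I ^ (t + 1) * I := Ideal.sup_mul _ _ _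
      _ ≤ M ⊔ I ^ (t + 2) := by
          rw [← pow_succ]
          exact sup_le (le_sup_of_le_left Ideal.mul_le_left) le_sup_right
  -- I^r ≤ span{g^r} ⊔ K ⊔ I^(2r)
  obtain ⟨m, rfl⟩ : ∃ m, r = m + 1 := ⟨r - 1, (Nat.succ_pred_eq_of_pos hr).symm⟩
  have h2 : I ^ (m + 1) ≤ Ideal.span {g ^ (m + 1)} ⊔ K ⊔ I ^ (2 * (m + 1)) := by
    calc I ^ (m + 1) ≤ (M ⊔ I ^ (m + 1 + 1)) ^ (m + 1) :=
          Ideal.pow_right_mono (h1 (m + 1)) _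
    _ ≤ M ^ (m + 1) ⊔ I ^ (m + 1 + 1) * (M ⊔ I ^ (m + 1 + 1)) ^ m :=
          aux_pow_succ_le _ _ _
    _ ≤ (Ideal.span {g} ^ (m + 1) ⊔ K) ⊔ I ^ (m + 1 + 1) * I ^ m := by
          refine sup_le (le_sup_of_le_left (aux_sup_pow_le _ _ _)) (le_sup_of_le_right ?_)
          exact Ideal.mul_mono_right
            (Ideal.pow_right_mono (sup_le hMI (Ideal.pow_le_self (by omega))) _)
    _ ≤ Ideal.span {g ^ (m + 1)} ⊔ K ⊔ I ^ (2 * (m + 1)) := by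
          rw [Ideal.span_singleton_pow, ← pow_add]
          have : m + 1 + 1 + m = 2 * (m + 1) := by ring
          rw [this]
  -- conclude
  have hpow : I ^ (2 * (m + 1)) ≤ (I ^ (m + 1) ⊔ K) ^ 2 := by
    rw [two_mul, pow_add, sq]
    exact Ideal.mul_mono le_sup_left le_sup_left
  rw [Ideal.span_union]
  apply le_antisymm
  · rw [hJ]
    refine sup_le ?_ ?_
    · refine h2.trans ?_
      refine sup_le (sup_le ?_ ?_) ?_
      · exact le_sup_of_le_left le_sup_right
      · exact le_sup_of_le_left le_sup_left
      · exact le_sup_of_le_right hpow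
    · exact le_sup_of_le_left le_sup_left
  · refine sup_le (sup_le ?_ ?_) ?_
    · rw [hJ]; exact le_sup_right
    · rw [hJ]
      exact le_sup_of_le_left ((Ideal.span_singleton_le_iff_mem _).2
        (Ideal.pow_mem_pow hgI _))
    · rw [hJ, sq]
      exact Ideal.mul_le_right
end

section
/- Let A be a commutative Noetherian ring and f₁,...,fₙ a regular sequence in A. Suppose I is an ideal containing (f₁,...,fₙ) with I = (f₁,...,fₙ) + I², and suppose f₁,...,f_{n-1}, g is also a regular sequence where g ∈ I. If (f₁,...,f_{n-1},g) = I ∩ K for an ideal K, and g is a unit modulo K while I + K = A, then for K₁ comaximal with both I and K and containing (f₁,...,fₙ,1-s) as above, the three ideals I, K₁, K are pairwise comaximal and I^{(2)} ∩ K₁ ∩ K = (f₁,...,f_{n-1}, g·fₙ) where I^{(2)} = (f₁,...,f_{n-1}) + I². -/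
open RingTheory.Sequence

private lemma ofFn_eq_init_append' {A : Type*} {n : ℕ} (f : Fin (n+1) → A) :
    List.ofFn f = List.ofFn (Fin.init f) ++ [f (Fin.last n)] := by
  rw [List.ofFn_succ', List.concat_eq_append]
  rfl

private lemma regular_last_aux' {A : Type*} [CommRing A] {n : ℕ} {f : Fin (n+1) → A}
    (hreg : IsWeaklyRegular A (List.ofFn f)) {a : A}
    (h : f (Fin.last n) * a ∈ Ideal.span (Set.range (Fin.init f))) :
    a ∈ Ideal.span (Set.range (Fin.init f)) := by
  rw [ofFn_eq_init_append', isWeaklyRegular_append_iff] at hreg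
  obtain ⟨-, h2⟩ := hreg
  rw [isWeaklyRegular_singleton_iff] at h2
  have hJ : (Ideal.ofList (List.ofFn (Fin.init f)) • ⊤ : Submodule A A)
      = Ideal.span (Set.range (Fin.init f)) := by
    rw [smul_eq_mul, Ideal.mul_top]
    unfold Ideal.ofList
    congr 1
    ext x
    exact List.mem_ofFn
  rw [hJ] at h2
  set J := Ideal.span (Set.range (Fin.init f))
  have h0 : f (Fin.last n) • ((Ideal.Quotient.mk J) a) = f (Fin.last n) • (0 : A ⧸ J) := by
    rw [smul_zero, show f (Fin.last n) • ((Ideal.Quotient.mk J) a)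
      = Ideal.Quotient.mk J (f (Fin.last n) * a) from rfl,
      Ideal.Quotient.eq_zero_iff_mem]
    exact h
  have := h2 h0
  rwa [Ideal.Quotient.eq_zero_iff_mem] at this

/-- Step 1 of the main theorem: with `f₁,…,fₙ` a regular sequence,
`I = (f₁,…,fₙ,s)` with `s ∈ I²`, `s(1-s) ∈ (f₁,…,fₙ)`, `I = (f₁,…,fₙ) + I²`,
`g = fₙ - s²` such that `f₁,…,f_{n-1}, g` is a regular sequence,
`(f₁,…,f_{n-1},g) = I ∩ K` with `I + K = A` and `g` a unit modulo `K`, and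
`K₁ = (f₁,…,fₙ,1-s)`, the ideals `I, K₁, K` are pairwise comaximal and
`I⁽²⁾ ∩ K₁ ∩ K = (f₁,…,f_{n-1}, g·fₙ)` where `I⁽²⁾ = (f₁,…,f_{n-1}) + I²`. -/
theorem step_one_comaximal_decomposition {A : Type*} [CommRing A] [IsNoetherianRing A]
    (n : ℕ) (f : Fin (n + 1) → A)
    (hreg : IsWeaklyRegular A (List.ofFn f))
    (I : Ideal A) (s : A) (hs2 : s ∈ I ^ 2)
    (hI : I = Ideal.span (Set.range f ∪ {s}))
    (hImod : I = Ideal.span (Set.range f) ⊔ I ^ 2)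
    (hss : s * (1 - s) ∈ Ideal.span (Set.range f))
    (g : A) (hg : g = f (Fin.last n) - s ^ 2)
    (hreg2 : IsWeaklyRegular A (List.ofFn (Fin.init f) ++ [g]))
    (K : Ideal A)
    (hIK : Ideal.span (Set.range (Fin.init f) ∪ {g}) = I ⊓ K)
    (hIKcom : I ⊔ K = ⊤)
    (hgK : IsUnit (Ideal.Quotient.mk K g))
    (K₁ : Ideal A) (hK₁ : K₁ = Ideal.span (Set.range f ∪ {1 - s}))
    (I₂ : Ideal A) (hI₂ : I₂ = Ideal.span (Set.range (Fin.init f)) ⊔ I ^ 2) :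
    (I ⊔ K₁ = ⊤ ∧ I ⊔ K = ⊤ ∧ K₁ ⊔ K = ⊤) ∧
      I₂ ⊓ K₁ ⊓ K = Ideal.span (Set.range (Fin.init f) ∪ {g * f (Fin.last n)}) := by
  set fn := f (Fin.last n) with hfn
  set J := Ideal.span (Set.range (Fin.init f)) with hJdef
  set F := Ideal.span (Set.range f) with hFdef
  -- range decomposition
  have hrange : Set.range f = Set.range (Fin.init f) ∪ {fn} := by
    ext x
    constructor
    · rintro ⟨i, rfl⟩
      rcases Fin.eq_castSucc_or_eq_last i with ⟨j, rfl⟩ | rfl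
      · exact Or.inl ⟨j, rfl⟩
      · exact Or.inr rfl
    · rintro (⟨j, rfl⟩ | rfl)
      · exact ⟨j.castSucc, rfl⟩
      · exact ⟨Fin.last n, rfl⟩
  have hFsplit : F = J ⊔ Ideal.span {fn} := by rw [hFdef, hrange, Ideal.span_union, hJdef]
  -- basic memberships
  have hfnF : fn ∈ F := Ideal.subset_span ⟨Fin.last n, rfl⟩
  have hJF : J ≤ F := Ideal.span_mono (by rintro x ⟨i, rfl⟩; exact ⟨i.castSucc, rfl⟩)
  have hFI : F ≤ I := by rw [hI]; exact Ideal.span_mono Set.subset_union_left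
  have hsI : s ∈ I := by rw [hI]; exact Ideal.subset_span (Or.inr rfl)
  have hFK₁ : F ≤ K₁ := by rw [hK₁]; exact Ideal.span_mono Set.subset_union_left
  have h1sK₁ : (1 - s) ∈ K₁ := by rw [hK₁]; exact Ideal.subset_span (Or.inr rfl)
  have hgIK : g ∈ I ⊓ K := by rw [← hIK]; exact Ideal.subset_span (Or.inr rfl)
  have hgI : g ∈ I := hgIK.1
  have hgK' : g ∈ K := hgIK.2
  have hJIK : J ≤ I ⊓ K := by rw [← hIK]; exact Ideal.span_mono Set.subset_union_left
  have hJK : J ≤ K := hJIK.trans inf_le_right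
  have hJI₂ : I₂ ≥ J := by rw [hI₂]; exact le_sup_left
  have hJK₁ : J ≤ K₁ := hJF.trans hFK₁
  have hfnI : fn ∈ I := hFI hfnF
  have hfnK₁ : fn ∈ K₁ := hFK₁ hfnF
  have hg1K₁ : g + 1 ∈ K₁ := by
    have e : g + 1 = fn + (1 - s) * (1 + s) := by rw [hg]; ring
    rw [e]
    exact add_mem hfnK₁ (Ideal.mul_mem_right _ _ h1sK₁)
  -- comaximality
  have cIK₁ : I ⊔ K₁ = ⊤ := by
    rw [Ideal.eq_top_iff_one, show (1 : A) = s + (1 - s) by ring]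
    exact add_mem (Ideal.mem_sup_left hsI) (Ideal.mem_sup_right h1sK₁)
  have cK₁K : K₁ ⊔ K = ⊤ := by
    rw [Ideal.eq_top_iff_one, show (1 : A) = (g + 1) + (-g) by ring]
    exact add_mem (Ideal.mem_sup_left hg1K₁) (Ideal.mem_sup_right (neg_mem hgK'))
  refine ⟨⟨cIK₁, hIKcom, cK₁K⟩, le_antisymm ?_ ?_⟩
  · -- hard direction
    intro x hx
    obtain ⟨⟨hxI₂, hxK₁⟩, hxK⟩ := hx
    rw [Ideal.span_union]
    -- x ∈ I ⊓ K = J ⊔ (g)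
    have hIKs : J ⊔ Ideal.span {g} = I ⊓ K := by rw [hJdef, ← Ideal.span_union]; exact hIK
    have hI₂I : I₂ ≤ I := by
      rw [hI₂]
      exact sup_le (hJF.trans hFI) (Ideal.pow_le_self two_ne_zero)
    have hxIK : x ∈ J ⊔ Ideal.span {g} := by rw [hIKs]; exact ⟨hI₂I hxI₂, hxK⟩
    obtain ⟨j, hj, w, hw, hx⟩ := Submodule.mem_sup.mp hxIK
    obtain ⟨y, rfl⟩ := Ideal.mem_span_singleton'.mp hw
    -- y * g ∈ I₂ and K₁
    have hgyI₂ : y * g ∈ I₂ := by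
      have : y * g = x - j := by rw [← hx]; ring
      rw [this]
      exact sub_mem hxI₂ (hJI₂ hj)
    have hgyK₁ : y * g ∈ K₁ := by
      have : y * g = x - j := by rw [← hx]; ring
      rw [this]
      exact sub_mem hxK₁ (hJK₁ hj)
    have hyK₁ : y ∈ K₁ := by
      rw [show y = (g + 1) * y - y * g by ring]
      exact sub_mem (Ideal.mul_mem_right _ _ hg1K₁) hgyK₁
    have hyK : y ∈ K := by
      have hygK : y * g ∈ K := by
        rw [show y * g = x - j by rw [← hx]; ring]
        exact sub_mem hxK (hJK hj)
      have h1 : Ideal.Quotient.mk K y * Ideal.Quotient.mk K g = 0 := by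
        rw [← map_mul, Ideal.Quotient.eq_zero_iff_mem]
        exact hygK
      rw [hgK.mul_left_eq_zero] at h1
      exact Ideal.Quotient.eq_zero_iff_mem.mp h1
    -- quadratic decomposition : y * fn ∈ J ⊔ Q
    set Q := Ideal.span {fn * fn, fn * s, s * s} with hQdef
    have hIP : I ≤ J ⊔ Ideal.span {fn, s} := by
      rw [hI]
      apply Ideal.span_le.mpr
      rintro x (⟨i, rfl⟩ | rfl)
      · rcases Fin.eq_castSucc_or_eq_last i with ⟨j, rfl⟩ | rfl
        · exact Ideal.mem_sup_left (Ideal.subset_span ⟨j, rfl⟩)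
        · exact Ideal.mem_sup_right (Ideal.subset_span (by simp [hfn]))
      · exact Ideal.mem_sup_right (Ideal.subset_span (by simp))
    have hPPQ : Ideal.span {fn, s} * Ideal.span {fn, s} ≤ Q := by
      rw [Ideal.span_mul_span]
      apply Ideal.span_le.mpr
      intro x hx
      simp only [Set.mem_mul] at hx
      obtain ⟨u, hu, v, hv, rfl⟩ := hx
      rcases hu with rfl | rfl <;> rcases hv with rfl | rfl
      · exact Ideal.subset_span (by simp)
      · exact Ideal.subset_span (by simp)
      · rw [mul_comm]; exact Ideal.subset_span (by simp)
      · exact Ideal.subset_span (by simp)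
    have hI2Q : I ^ 2 ≤ J ⊔ Q := by
      rw [pow_two]
      calc I * I ≤ (J ⊔ Ideal.span {fn, s}) * (J ⊔ Ideal.span {fn, s}) :=
            Ideal.mul_mono hIP hIP
        _ ≤ J ⊔ Q := by
            rw [Ideal.sup_mul, Ideal.mul_sup, Ideal.mul_sup]
            refine sup_le (sup_le ?_ ?_) (sup_le ?_ ?_)
            · exact le_sup_of_le_left Ideal.mul_le_right
            · exact le_sup_of_le_left Ideal.mul_le_left
            · exact le_sup_of_le_left Ideal.mul_le_right
            · exact le_sup_of_le_right hPPQ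
    have hyfnJQ : y * fn ∈ J ⊔ Q := by
      have hygJQ : y * g ∈ J ⊔ Q := by
        have : I₂ ≤ J ⊔ Q := by
          rw [hI₂]
          exact sup_le le_sup_left hI2Q
        exact this hgyI₂
      have e : y * fn = y * g + y * (s * s) := by rw [hg]; ring
      rw [e]
      exact add_mem hygJQ (Ideal.mem_sup_right
        (Ideal.mul_mem_left _ _ (Ideal.subset_span (by simp))))
    obtain ⟨j₁, hj₁, q, hq, hyfn⟩ := Submodule.mem_sup.mp hyfnJQ
    rw [hQdef, show ({fn * fn, fn * s, s * s} : Set A)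
      = insert (fn * fn) {fn * s, s * s} from rfl, Ideal.mem_span_insert] at hq
    obtain ⟨α, q', hq', rfl⟩ := hq
    rw [show ({fn * s, s * s} : Set A) = insert (fn * s) {s * s} from rfl,
      Ideal.mem_span_insert] at hq'
    obtain ⟨β, q'', hq'', rfl⟩ := hq'
    obtain ⟨γ, rfl⟩ := Ideal.mem_span_singleton'.mp hq''
    -- s*(1-s) = j₀ + d * fn
    rw [hFsplit] at hss
    obtain ⟨j₀, hj₀, w₀, hw₀, hs1⟩ := Submodule.mem_sup.mp hss
    obtain ⟨d, rfl⟩ := Ideal.mem_span_singleton'.mp hw₀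
    -- key computation
    set wkey := y - α * fn - β * s + γ * d with hwkey
    have hγs : γ * s = fn * wkey + (γ * j₀ - j₁) := by
      rw [hwkey]
      linear_combination hyfn - γ * hs1
    have hkey : fn * (y - α * fn - β * s - wkey * s) = j₁ + (γ * j₀ - j₁) * s := by
      linear_combination (-1 : A) * hyfn + s * hγs
    have hcJ : y - α * fn - β * s - wkey * s ∈ J := by
      apply regular_last_aux' hreg
      rw [hkey]
      exact add_mem hj₁ (Ideal.mul_mem_right _ _ (sub_mem (Ideal.mul_mem_left _ _ hj₀) hj₁))
    have hyI : y ∈ I := by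
      rw [show y = (y - α * fn - β * s - wkey * s) + α * fn + (β + wkey) * s by ring]
      exact add_mem (add_mem ((hJF.trans hFI) hcJ) (Ideal.mul_mem_left _ _ hfnI))
        (Ideal.mul_mem_left _ _ hsI)
    -- y ∈ I ⊓ K = J ⊔ (g)
    have hyIK : y ∈ J ⊔ Ideal.span {g} := by rw [hIKs]; exact ⟨hyI, hyK⟩
    obtain ⟨j₃, hj₃, w₃, hw₃, hy⟩ := Submodule.mem_sup.mp hyIK
    obtain ⟨z, rfl⟩ := Ideal.mem_span_singleton'.mp hw₃
    have hzK₁ : z ∈ K₁ := by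
      have hzgK₁ : z * g ∈ K₁ := by
        rw [show z * g = y - j₃ by rw [← hy]; ring]
        exact sub_mem hyK₁ (hJK₁ hj₃)
      rw [show z = (g + 1) * z - z * g by ring]
      exact sub_mem (Ideal.mul_mem_right _ _ hg1K₁) hzgK₁
    -- K₁ = J ⊔ span {fn, 1-s}
    have hK₁split : K₁ ≤ J ⊔ Ideal.span {fn, 1 - s} := by
      rw [hK₁]
      apply Ideal.span_le.mpr
      rintro x (⟨i, rfl⟩ | rfl)
      · rcases Fin.eq_castSucc_or_eq_last i with ⟨j', rfl⟩ | rfl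
        · exact Ideal.mem_sup_left (Ideal.subset_span ⟨j', rfl⟩)
        · exact Ideal.mem_sup_right (Ideal.subset_span (by simp [hfn]))
      · exact Ideal.mem_sup_right (Ideal.subset_span (by simp))
    obtain ⟨j₄, hj₄, p, hp, hz⟩ := Submodule.mem_sup.mp (hK₁split hzK₁)
    obtain ⟨a, b, hab⟩ := Ideal.mem_span_pair.mp hp
    -- g * fn ∈ F and g * (1-s) ∈ F
    have hgfnF : g * fn ∈ F := Ideal.mul_mem_left _ _ hfnF
    have hg1sF : g * (1 - s) ∈ F := by
      rw [show g * (1 - s) = fn * (1 - s) - (s * (1 - s)) * s by rw [hg]; ring]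
      refine sub_mem (Ideal.mul_mem_right _ _ hfnF) (Ideal.mul_mem_right _ _ ?_)
      rw [hFsplit, ← hs1]
      exact Submodule.add_mem_sup hj₀ (Ideal.mem_span_singleton'.mpr ⟨d, rfl⟩)
    have hyF : y ∈ F := by
      rw [show y = j₃ + j₄ * g + a * (g * fn) + b * (g * (1 - s)) by
        rw [← hy, ← hz, ← hab]; ring]
      exact add_mem (add_mem (add_mem (hJF hj₃) (hJF (Ideal.mul_mem_right _ _ hj₄)))
        (Ideal.mul_mem_left _ _ hgfnF)) (Ideal.mul_mem_left _ _ hg1sF)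
    -- conclude
    rw [hFsplit] at hyF
    obtain ⟨j₅, hj₅, w₅, hw₅, hy₅⟩ := Submodule.mem_sup.mp hyF
    obtain ⟨c, rfl⟩ := Ideal.mem_span_singleton'.mp hw₅
    rw [← hx, ← hy₅]
    rw [show j + (j₅ + c * fn) * g = (j + j₅ * g) + c * (g * fn) by ring]
    exact add_mem (Ideal.mem_sup_left (add_mem hj (Ideal.mul_mem_right _ _ hj₅)))
      (Ideal.mem_sup_right (Ideal.mul_mem_left _ _ (Ideal.subset_span rfl)))
  · -- easy direction
    rw [Ideal.span_union]
    refine sup_le ?_ ?_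
    · exact le_inf (le_inf hJI₂ hJK₁) hJK
    · apply Ideal.span_le.mpr
      rintro x rfl
      refine ⟨⟨?_, Ideal.mul_mem_left _ _ hfnK₁⟩, Ideal.mul_mem_right _ _ hgK'⟩
      rw [hI₂]
      exact Ideal.mem_sup_right (by rw [pow_two]; exact Ideal.mul_mem_mul hgI hfnI)
end

section
/- Let B be a commutative Noetherian ring of dimension n+1 with n odd, and let P be a finitely generated projective B-module of rank n such that P ⊕ B ≅ B^{n+1}. Then P has a unimodular element, i.e., P ≅ Q ⊕ B for some projective module Q of rank n-1. -/
/-- The rank of a module at a prime: the finrank of its localization. -/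
noncomputable def rankAtPrime (R : Type*) [CommRing R] (M : Type*) [AddCommGroup M]
    [Module R M] (p : Ideal R) [p.IsPrime] : ℕ :=
  Module.finrank (Localization.AtPrime p) (LocalizedModule p.primeCompl M)


open LinearMap

/-- Localization commutes with products. -/
theorem isLocalizedModule_prodMap {R : Type*} [CommRing R] (S : Submonoid R)
    {M M' N N' : Type*} [AddCommMonoid M] [AddCommMonoid M'] [AddCommMonoid N] [AddCommMonoid N']
    [Module R M] [Module R M'] [Module R N] [Module R N']
    (f : M →ₗ[R] M') (g : N →ₗ[R] N') [IsLocalizedModule S f] [IsLocalizedModule S g] :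
    IsLocalizedModule S (f.prodMap g) where
  map_units s := by
    rw [Module.End.isUnit_iff]
    have hf := (Module.End.isUnit_iff _).mp (IsLocalizedModule.map_units f s)
    have hg := (Module.End.isUnit_iff _).mp (IsLocalizedModule.map_units g s)
    constructor
    · rintro ⟨a, b⟩ ⟨c, d⟩ h
      simp only [Module.algebraMap_end_apply, Prod.smul_mk, Prod.mk.injEq] at h
      have h1 : a = c := hf.1 (by simpa [Module.algebraMap_end_apply] using h.1)
      have h2 : b = d := hg.1 (by simpa [Module.algebraMap_end_apply] using h.2)
      simp [h1, h2]
    · rintro ⟨a, b⟩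
      obtain ⟨a', ha⟩ := hf.2 a
      obtain ⟨b', hb⟩ := hg.2 b
      simp only [Module.algebraMap_end_apply] at ha hb ⊢
      exact ⟨(a', b'), by simp [Prod.smul_mk, ha, hb]⟩
  surj := by
    rintro ⟨a, b⟩
    obtain ⟨⟨ma, sa⟩, ha⟩ := IsLocalizedModule.surj S f a
    obtain ⟨⟨mb, sb⟩, hb⟩ := IsLocalizedModule.surj S g b
    refine ⟨⟨(sb • ma, sa • mb), sa * sb⟩, ?_⟩
    rw [Submonoid.smul_def] at ha hb
    have h1 : (sa * sb : S) • a = f (sb • ma) := by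
      rw [Submonoid.smul_def, Submonoid.smul_def, map_smul, ← ha, Submonoid.coe_mul,
        mul_comm, mul_smul]
    have h2 : (sa * sb : S) • b = g (sa • mb) := by
      rw [Submonoid.smul_def, Submonoid.smul_def, map_smul, ← hb, Submonoid.coe_mul, mul_smul]
    ext
    · simpa using h1
    · simpa using h2
  exists_of_eq := by
    rintro ⟨a, b⟩ ⟨c, d⟩ h
    simp only [LinearMap.prodMap_apply, Prod.mk.injEq] at h
    obtain ⟨s1, hs1⟩ := IsLocalizedModule.exists_of_eq (S := S) (f := f) h.1
    obtain ⟨s2, hs2⟩ := IsLocalizedModule.exists_of_eq (S := S) (f := g) h.2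
    refine ⟨s1 * s2, ?_⟩
    ext
    · show (s1 * s2 : S) • a = (s1 * s2 : S) • c
      rw [mul_comm, mul_smul, mul_smul, hs1]
    · show (s1 * s2 : S) • b = (s1 * s2 : S) • d
      rw [mul_smul, mul_smul, hs2]


set_option maxHeartbeats 1600000 in
/-- Bass's theorem: over a Noetherian ring `B` of dimension `n+1` with `n` odd, a
projective module `P` of rank `n` with `P ⊕ B ≅ B^{n+1}` has a unimodular element,
i.e. `P ≅ Q ⊕ B` with `Q` projective of rank `n-1`. -/
theorem bass_unimodular_element {B : Type*} [CommRing B] [IsNoetherianRing B]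
    (n : ℕ) (hodd : Odd n) (hdim : ringKrullDim B = n + 1)
    (P : Type*) [AddCommGroup P] [Module B P]
    [Module.Finite B P] [Module.Projective B P]
    (hrank : ∀ p : Ideal B, ∀ _ : p.IsPrime, rankAtPrime B P p = n)
    (hstab : Nonempty ((P × B) ≃ₗ[B] (Fin (n + 1) → B))) :
    ∃ Q : Submodule B P, Module.Projective B Q ∧
      (∀ p : Ideal B, ∀ _ : p.IsPrime, rankAtPrime B Q p = n - 1) ∧
      Nonempty (P ≃ₗ[B] (Q × B)) := by
  classical
  obtain ⟨m, hm⟩ := hodd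
  obtain ⟨e⟩ := hstab
  -- index bookkeeping: `Fin (n+1)` is in bijection with `Fin (m+1) × Fin 2`
  let eIdx : Fin (m + 1) × Fin 2 ≃ Fin (n + 1) :=
    finProdFinEquiv.trans (finCongr (by omega : (m + 1) * 2 = n + 1))
  have sumpair : ∀ F : Fin (n + 1) → B,
      ∑ i, F i = ∑ k : Fin (m + 1), (F (eIdx (k, 0)) + F (eIdx (k, 1))) := by
    intro F
    rw [← Equiv.sum_comp eIdx F, Fintype.sum_prod_type]
    simp [Fin.sum_univ_two]
  -- the unimodular row `b` given by the stable freeness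
  set b : Fin (n + 1) → B := fun i => (e.symm fun j => if i = j then 1 else 0).2 with hb
  have key : ∀ y : Fin (n + 1) → B, (e.symm y).2 = ∑ i, y i * b i := by
    intro y
    have := LinearMap.pi_apply_eq_sum_univ
      ((LinearMap.snd B P B) ∘ₗ (e.symm : (Fin (n + 1) → B) →ₗ[B] P × B)) y
    simpa [hb, smul_eq_mul] using this
  -- the element of the kernel of the row, by the alternating pairing trick
  set w : Fin (n + 1) → B := fun i =>
    if (eIdx.symm i).2 = 0 then -b (eIdx ((eIdx.symm i).1, 1)) else b (eIdx ((eIdx.symm i).1, 0))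
    with hwdef
  have hw0 : ∀ k : Fin (m + 1), w (eIdx (k, 0)) = -b (eIdx (k, 1)) := by
    intro k; simp [hwdef, Equiv.symm_apply_apply]
  have hw1 : ∀ k : Fin (m + 1), w (eIdx (k, 1)) = b (eIdx (k, 0)) := by
    intro k; simp [hwdef, Equiv.symm_apply_apply]
  have claim1 : ∑ i, w i * b i = 0 := by
    rw [sumpair]
    apply Finset.sum_eq_zero
    intro k _
    rw [hw0, hw1]
    ring
  -- the coefficients witnessing unimodularity of the row
  set x : Fin (n + 1) → B := fun i => e (0, 1) i with hxdef
  have hx : ∑ i, x i * b i = 1 := by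
    have h := key (e (0, 1))
    rw [e.symm_apply_apply] at h
    exact h.symm
  set c : Fin (n + 1) → B := fun i =>
    if (eIdx.symm i).2 = 0 then -x (eIdx ((eIdx.symm i).1, 1)) else x (eIdx ((eIdx.symm i).1, 0))
    with hcdef
  have hc0 : ∀ k : Fin (m + 1), c (eIdx (k, 0)) = -x (eIdx (k, 1)) := by
    intro k; simp [hcdef, Equiv.symm_apply_apply]
  have hc1 : ∀ k : Fin (m + 1), c (eIdx (k, 1)) = x (eIdx (k, 0)) := by
    intro k; simp [hcdef, Equiv.symm_apply_apply]
  have claim2 : ∑ i, c i * w i = 1 := by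
    rw [sumpair]
    have hterm : ∀ k : Fin (m + 1),
        c (eIdx (k, 0)) * w (eIdx (k, 0)) + c (eIdx (k, 1)) * w (eIdx (k, 1))
          = (x (eIdx (k, 0)) * b (eIdx (k, 0)) + x (eIdx (k, 1)) * b (eIdx (k, 1))) := by
      intro k
      rw [hc0, hc1, hw0, hw1]
      ring
    rw [Finset.sum_congr rfl fun k _ => hterm k, ← sumpair fun i => x i * b i, hx]
  -- the linear functional and the unimodular element
  set φ : (Fin (n + 1) → B) →ₗ[B] B := ∑ i : Fin (n + 1), c i • LinearMap.proj i with hφdef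
  have hφ : ∀ y : Fin (n + 1) → B, φ y = ∑ i, c i * y i := by
    intro y
    simp [hφdef, LinearMap.sum_apply, smul_eq_mul]
  set ψ : P →ₗ[B] B := φ ∘ₗ (e : P × B →ₗ[B] (Fin (n + 1) → B)) ∘ₗ LinearMap.inl B P B with hψdef
  set p₀ : P := (e.symm w).1 with hp₀def
  have hsymmw : e.symm w = (p₀, 0) := by
    have h2 : (e.symm w).2 = 0 := by rw [key w]; exact claim1
    exact Prod.ext rfl h2
  have hew : e (p₀, 0) = w := by rw [← hsymmw, e.apply_symm_apply]
  have hψp₀ : ψ p₀ = 1 := by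
    have : ψ p₀ = φ (e (p₀, 0)) := rfl
    rw [this, hew, hφ w, claim2]
  -- the splitting `P ≃ ker ψ × B`
  set r : P →ₗ[B] P := LinearMap.id - ψ.smulRight p₀ with hrdef
  have hrker : ∀ q : P, r q ∈ LinearMap.ker ψ := by
    intro q
    simp [hrdef, LinearMap.mem_ker, map_sub, map_smul, hψp₀, smul_eq_mul]
  set Q : Submodule B P := LinearMap.ker ψ with hQdef
  set r' : P →ₗ[B] Q := r.codRestrict Q hrker with hr'def
  have hr'q : ∀ q : Q, r' (q : P) = q := by
    rintro ⟨q, hq⟩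
    have hq' : ψ q = 0 := hq
    apply Subtype.ext
    simp [hr'def, hrdef, hq']
  set F : P →ₗ[B] Q × B := LinearMap.prod r' ψ with hFdef
  set G : Q × B →ₗ[B] P := LinearMap.coprod Q.subtype (LinearMap.toSpanSingleton B P p₀) with hGdef
  have hGF : G ∘ₗ F = LinearMap.id := by
    ext q
    simp [hFdef, hGdef, hr'def, hrdef, LinearMap.codRestrict_apply,
      LinearMap.toSpanSingleton_apply, sub_add_cancel]
  have hFG : F ∘ₗ G = LinearMap.id := by
    apply LinearMap.ext
    rintro ⟨⟨q, hq⟩, t⟩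
    have hq' : ψ q = 0 := hq
    apply Prod.ext
    · apply Subtype.ext
      simp [hFdef, hGdef, hr'def, hrdef, LinearMap.codRestrict_apply,
        LinearMap.toSpanSingleton_apply, map_add, map_smul, hq', hψp₀, smul_eq_mul]
    · simp [hFdef, hGdef, LinearMap.toSpanSingleton_apply, map_add, map_smul, hq', hψp₀,
        smul_eq_mul]
  let E : P ≃ₗ[B] Q × B := LinearEquiv.ofLinear F G hFG hGF
  have hQproj : Module.Projective B Q :=
    Module.Projective.of_split Q.subtype r' (by ext q; exact congrArg Subtype.val (hr'q q))
  have hQfin : Module.Finite B Q :=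
    Module.Finite.of_surjective r' (fun q => ⟨(q : P), hr'q q⟩)
  refine ⟨Q, hQproj, ?_, ⟨E⟩⟩
  -- the rank computation
  intro p hp
  set S := p.primeCompl
  haveI := hQproj
  haveI := hQfin
  haveI : Module.FinitePresentation B Q := Module.finitePresentation_of_projective B Q
  haveI hfreeQ : Module.Free (Localization.AtPrime p) (LocalizedModule S Q) := by
    have hfl := Module.freeLocus_eq_univ (R := B) (M := Q)
    exact Module.mem_freeLocus.mp (by rw [hfl]; trivial : (⟨p, hp⟩ : PrimeSpectrum B) ∈ Module.freeLocus B Q)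
  haveI : Module.Finite (Localization.AtPrime p) (LocalizedModule S Q) :=
    Module.Finite.of_isLocalizedModule S (LocalizedModule.mkLinearMap S Q)
  let eB : LocalizedModule S B ≃ₗ[B] Localization.AtPrime p :=
    IsLocalizedModule.linearEquiv S (LocalizedModule.mkLinearMap S B) (Algebra.linearMap B (Localization.AtPrime p))
  let eB' : LocalizedModule S B ≃ₗ[Localization.AtPrime p] Localization.AtPrime p :=
    LinearEquiv.extendScalarsOfIsLocalization S (Localization.AtPrime p) eB
  haveI : Module.Free (Localization.AtPrime p) (LocalizedModule S B) :=
    Module.Free.of_equiv eB'.symm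
  haveI : Module.Finite (Localization.AtPrime p) (LocalizedModule S B) :=
    Module.Finite.of_isLocalizedModule S (LocalizedModule.mkLinearMap S B)
  haveI hploc : IsLocalizedModule S
      ((LocalizedModule.mkLinearMap S Q).prodMap (LocalizedModule.mkLinearMap S B)) :=
    isLocalizedModule_prodMap S _ _
  haveI : IsLocalizedModule S
      (((LocalizedModule.mkLinearMap S Q).prodMap (LocalizedModule.mkLinearMap S B)) ∘ₗ
        (E : P →ₗ[B] Q × B)) :=
    IsLocalizedModule.of_linearEquiv_right S _ E
  let big : LocalizedModule S P ≃ₗ[B] (LocalizedModule S Q × LocalizedModule S B) :=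
    IsLocalizedModule.linearEquiv S (LocalizedModule.mkLinearMap S P)
      (((LocalizedModule.mkLinearMap S Q).prodMap (LocalizedModule.mkLinearMap S B)) ∘ₗ
        (E : P →ₗ[B] Q × B))
  let big' : LocalizedModule S P ≃ₗ[Localization.AtPrime p]
      (LocalizedModule S Q × LocalizedModule S B) :=
    LinearEquiv.extendScalarsOfIsLocalization S (Localization.AtPrime p) big
  have h1 : rankAtPrime B P p
      = Module.finrank (Localization.AtPrime p) (LocalizedModule S Q × LocalizedModule S B) :=
    big'.finrank_eq
  have h2 : Module.finrank (Localization.AtPrime p) (LocalizedModule S Q × LocalizedModule S B)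
      = Module.finrank (Localization.AtPrime p) (LocalizedModule S Q)
        + Module.finrank (Localization.AtPrime p) (LocalizedModule S B) :=
    Module.finrank_prod
  have h3 : Module.finrank (Localization.AtPrime p) (LocalizedModule S B) = 1 := by
    rw [eB'.finrank_eq]
    exact Module.finrank_self _
  have h4 : rankAtPrime B P p = n := hrank p hp
  have h5 : rankAtPrime B Q p = Module.finrank (Localization.AtPrime p) (LocalizedModule S Q) := rfl
  omega
end
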